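/- arXiv:1905.04219 — 4 statements merged into one kernel-verified Lean document; each statement's English description precedes it below -/
import Mathlib

section
/- In any sequence of swaps (σ_0,…,σ_t), each object passes through each edge of the graph at most once (i.e., for each object y and each edge {i,j} ∈ E there is at most one index k such that the k-th swap exchanges y between agents i and j). Consequently, every sequence of swaps whose consecutive assignments are distinct has length t ≤ n·|E|/2. -/
/-- The setting of the swap-dynamics model with `N` agents `0, 1, ..., N-1` and
`N` objects, object `j` being the object initially held by agent `j`.
Each agent has a preference list (a duplicate-free list of objects, most preferred
first), and the agents form a social network given by a simple graph. -/
structure SwapModel (N : ℕ) where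
  /-- the preference list of each agent -/
  pref : Fin N → List (Fin N)
  nodup : ∀ i, (pref i).Nodup
  /-- the underlying social network -/
  G : SimpleGraph (Fin N)

namespace SwapModel

variable {N : ℕ}

/-- Agent `i` prefers object `u` to object `v`: both appear on her preference list
and `u` appears (strictly) earlier. -/
def Prefers (M : SwapModel N) (i u v : Fin N) : Prop :=
  ∃ k l : ℕ, k < l ∧ (M.pref i)[k]? = some u ∧ (M.pref i)[l]? = some v

/-- An assignment: a bijection mapping every agent to an object on her list. -/
def IsAssignment (M : SwapModel N) (σ : Fin N → Fin N) : Prop :=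
  Function.Bijective σ ∧ ∀ i, σ i ∈ M.pref i

/-- `(σ 0, σ 1, …, σ t)` is a sequence of swaps: each next assignment arises from
the previous one by performing a swap between two adjacent agents, each of whom
prefers the object of the other agent. -/
def IsSwapSeq (M : SwapModel N) (t : ℕ) (σ : ℕ → Fin N → Fin N) : Prop :=
  M.IsAssignment (σ 0) ∧
    ∀ k, k < t → ∃ i j : Fin N, M.G.Adj i j ∧
      M.Prefers i (σ k j) (σ k i) ∧ M.Prefers j (σ k i) (σ k j) ∧
      σ (k + 1) = σ k ∘ Equiv.swap i j

end SwapModel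

namespace SwapModel

/-- In the swap sequence `σ`, object `y` passes through the edge `{i, j}` at step `k`:
the `k`-th swap exchanges the objects of agents `i` and `j`, one of which is `y`. -/
def PassesThroughAt {N : ℕ} (M : SwapModel N) (σ : ℕ → Fin N → Fin N)
    (y : Fin N) (i j : Fin N) (k : ℕ) : Prop :=
  M.G.Adj i j ∧ M.Prefers i (σ k j) (σ k i) ∧ M.Prefers j (σ k i) (σ k j) ∧
    σ (k + 1) = σ k ∘ Equiv.swap i j ∧ (σ k i = y ∨ σ k j = y)

end SwapModel

/-!
An agent only ever swaps to an object she prefers, so the object she holds weakly improves along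
the sequence. When `y` passes from agent `i` to agent `j`, agent `i` receives an object she
prefers to `y`, and from then on she holds objects she prefers to `y`. So at any later step `i`
neither holds `y` nor would accept `y` in a swap, and `y` never passes through `{i, j}` again.
Each step therefore yields two pairs (moved object, edge) that no other step yields, whence
`2 t ≤ N · |E|`.
-/

open Finset

theorem List.Nodup.eq_of_getElem?_eq_some {α : Type*} {l : List α} (hl : l.Nodup) {k m : ℕ}
    {u : α} (hk : l[k]? = some u) (hm : l[m]? = some u) : k = m :=
  (List.getElem?_inj (List.getElem?_eq_some_iff.1 hk).1 hl).1 (hk.trans hm.symm)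

namespace SwapModel

variable {N : ℕ} {M : SwapModel N}

section Prefers

variable {i u v w : Fin N}

theorem Prefers.trans (huv : M.Prefers i u v) (hvw : M.Prefers i v w) : M.Prefers i u w := by
  obtain ⟨k, l, hkl, hu, hv⟩ := huv
  obtain ⟨l', m, hlm, hv', hw⟩ := hvw
  obtain rfl : l = l' := (M.nodup i).eq_of_getElem?_eq_some hv hv'
  exact ⟨k, m, hkl.trans hlm, hu, hw⟩

theorem Prefers.ne (h : M.Prefers i u v) : u ≠ v := by
  rintro rfl
  obtain ⟨k, l, hkl, hk, hl⟩ := h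
  exact hkl.ne ((M.nodup i).eq_of_getElem?_eq_some hk hl)

theorem Prefers.asymm (huv : M.Prefers i u v) (hvu : M.Prefers i v u) : False :=
  (huv.trans hvu).ne rfl

end Prefers

section SwapSeq

variable {t : ℕ} {σ : ℕ → Fin N → Fin N}

theorem IsSwapSeq.apply_succ_eq_or_prefers (hseq : M.IsSwapSeq t σ) {k : ℕ} (hk : k < t)
    (a : Fin N) : σ (k + 1) a = σ k a ∨ M.Prefers a (σ (k + 1) a) (σ k a) := by
  obtain ⟨i, j, -, hi, hj, hstep⟩ := hseq.2 k hk
  rw [hstep, Function.comp_apply]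
  rcases eq_or_ne a i with rfl | hai
  · exact Or.inr (by rwa [Equiv.swap_apply_left])
  rcases eq_or_ne a j with rfl | haj
  · exact Or.inr (by rwa [Equiv.swap_apply_right])
  · exact Or.inl (by rw [Equiv.swap_apply_of_ne_of_ne hai haj])

theorem IsSwapSeq.apply_eq_or_prefers (hseq : M.IsSwapSeq t σ) (a : Fin N) {k k' : ℕ}
    (hkk' : k ≤ k') (hk' : k' ≤ t) : σ k' a = σ k a ∨ M.Prefers a (σ k' a) (σ k a) := by
  induction k', hkk' using Nat.le_induction with
  | base => exact Or.inl rfl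
  | succ m _ ih =>
    rcases hseq.apply_succ_eq_or_prefers (Nat.lt_of_succ_le hk') a with hstep | hstep <;>
      rcases ih (by omega) with hih | hih
    · exact Or.inl (hstep.trans hih)
    · exact Or.inr (hstep ▸ hih)
    · exact Or.inr (hih ▸ hstep)
    · exact Or.inr (hstep.trans hih)

theorem IsSwapSeq.prefers_of_le (hseq : M.IsSwapSeq t σ) {a y : Fin N} {k k' : ℕ}
    (hkk' : k ≤ k') (hk' : k' ≤ t) (hy : M.Prefers a (σ k a) y) : M.Prefers a (σ k' a) y := by
  rcases hseq.apply_eq_or_prefers a hkk' hk' with h | h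
  · rwa [h]
  · exact h.trans hy

end SwapSeq

section PassesThrough

variable {σ : ℕ → Fin N → Fin N} {y i j : Fin N} {k : ℕ}

theorem PassesThroughAt.symm (h : M.PassesThroughAt σ y i j k) : M.PassesThroughAt σ y j i k :=
  let ⟨hadj, hi, hj, hstep, hy⟩ := h
  ⟨hadj.symm, hj, hi, by rw [hstep, Equiv.swap_comm], hy.symm⟩

theorem PassesThroughAt.apply_ne (h : M.PassesThroughAt σ y i j k) : σ k j ≠ σ k i :=
  h.2.1.ne

theorem PassesThroughAt.prefers_apply_succ (h : M.PassesThroughAt σ (σ k i) i j k) :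
    M.Prefers i (σ (k + 1) i) (σ k i) := by
  obtain ⟨-, hi, -, hstep, -⟩ := h
  rwa [hstep, Function.comp_apply, Equiv.swap_apply_left]

variable {t : ℕ}

theorem IsSwapSeq.not_passesThroughAt_of_lt (hseq : M.IsSwapSeq t σ) {k' : ℕ} (hkk' : k < k')
    (hk' : k' < t) (h : M.PassesThroughAt σ y i j k) : ¬M.PassesThroughAt σ y i j k' := by
  wlog hy : σ k i = y generalizing i j
  · exact fun h' ↦ this h.symm (h.2.2.2.2.resolve_left hy) h'.symm
  subst hy
  rintro ⟨-, hi', -, -, hy'⟩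
  have hiy : M.Prefers i (σ k' i) (σ k i) :=
    hseq.prefers_of_le hkk' hk'.le h.prefers_apply_succ
  rcases hy' with hy' | hy'
  · exact hiy.ne hy'
  · exact hiy.asymm (hy' ▸ hi')

theorem IsSwapSeq.eq_of_passesThroughAt (hseq : M.IsSwapSeq t σ) {k' : ℕ} (hk : k < t)
    (hk' : k' < t) (h : M.PassesThroughAt σ y i j k) (h' : M.PassesThroughAt σ y i j k') :
    k = k' := by
  rcases lt_trichotomy k k' with hlt | heq | hgt
  · exact (hseq.not_passesThroughAt_of_lt hlt hk' h h').elim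
  · exact heq
  · exact (hseq.not_passesThroughAt_of_lt hgt hk h' h).elim

theorem IsSwapSeq.eq_of_passesThroughAt_of_sym2_eq (hseq : M.IsSwapSeq t σ) {i' j' : Fin N}
    {k' : ℕ} (hk : k < t) (hk' : k' < t) (h : M.PassesThroughAt σ y i j k)
    (h' : M.PassesThroughAt σ y i' j' k') (he : s(i, j) = s(i', j')) : k = k' := by
  rcases Sym2.eq_iff.1 he with ⟨rfl, rfl⟩ | ⟨rfl, rfl⟩
  · exact hseq.eq_of_passesThroughAt hk hk' h h'
  · exact hseq.eq_of_passesThroughAt hk hk' h h'.symm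

end PassesThrough

theorem IsSwapSeq.two_mul_le [DecidableRel M.G.Adj] {t : ℕ} {σ : ℕ → Fin N → Fin N}
    (hseq : M.IsSwapSeq t σ) : 2 * t ≤ N * #M.G.edgeFinset := by
  choose I J hadj hI hJ hstep using fun k : Fin t ↦ hseq.2 k k.2
  have hpass (k : Fin t) (b : Bool) :
      M.PassesThroughAt σ (σ k (cond b (I k) (J k))) (I k) (J k) k := by
    refine ⟨hadj k, hI k, hJ k, hstep k, ?_⟩
    cases b <;> simp
  let f : Fin t × Bool → Fin N × Sym2 (Fin N) := fun p ↦
    (σ p.1 (cond p.2 (I p.1) (J p.1)), s(I p.1, J p.1))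
  have hmaps : Set.MapsTo f ↑(univ : Finset (Fin t × Bool))
      ↑((univ : Finset (Fin N)) ×ˢ M.G.edgeFinset) :=
    fun p _ ↦ by simpa [f] using hadj p.1
  have hinj : Function.Injective f := by
    rintro ⟨k, b⟩ ⟨k', b'⟩ hf
    simp only [f, Prod.mk.injEq] at hf
    obtain rfl : k = k' := Fin.ext <| hseq.eq_of_passesThroughAt_of_sym2_eq k.2 k'.2
      (hpass k b) (hf.1 ▸ hpass k' b') hf.2
    have hne := (hpass k true).apply_ne
    cases b <;> cases b' <;> simp_all
  simpa [mul_comm] using card_le_card_of_injOn f hmaps hinj.injOn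

end SwapModel

/-- In any sequence of swaps `(σ 0, …, σ t)`, each object passes
through each edge of the graph at most once.  Consequently, every sequence of swaps
whose consecutive assignments are distinct has length `t ≤ N * |E| / 2`. -/
theorem statement1 {N : ℕ} (M : SwapModel N) [DecidableRel M.G.Adj]
    (t : ℕ) (σ : ℕ → Fin N → Fin N) (hseq : M.IsSwapSeq t σ) :
    (∀ (y : Fin N) (i j : Fin N) (k k' : ℕ), k < t → k' < t →
      M.PassesThroughAt σ y i j k → M.PassesThroughAt σ y i j k' → k = k') ∧
    ((∀ k, k < t → σ (k + 1) ≠ σ k) → t ≤ N * M.G.edgeFinset.card / 2) :=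
  ⟨fun _ _ _ _ _ hk hk' ↦ hseq.eq_of_passesThroughAt hk hk',
    fun _ ↦ (Nat.le_div_iff_mul_le two_pos).2 (by linarith [hseq.two_mul_le])⟩
end

section
/- Under the stated setup: (i) the last swap of φ' equals τ_r, i.e., τ'_s = τ_r; (ii) a_1 = q, i.e., agent q, who initially holds x_q, is the first agent to give away x_q; (iii) for each z ∈ {1,…,s}, agent a_z prefers x_{a_{z+1}} to x_q; and (iv) for each z ∈ {2,…,s}, the preference list of agent a_z is exactly x_{a_{z+1}} ≻ x_q ≻ x_{a_z}, where x_{a_z} is her initial object. -/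
/-- A swap: agent `a1` gives object `o1` to agent `a2` and receives object `o2`;
this records the swap `τ = {{a1, o1}, {a2, o2}}`. -/
structure Swap (N : ℕ) where
  a1 : Fin N
  o1 : Fin N
  a2 : Fin N
  o2 : Fin N

namespace SwapModel

variable {N : ℕ}

/-- The assignment `σ` admits the swap `τ`. -/
def Admitted (M : SwapModel N) (σ : Fin N → Fin N) (τ : Swap N) : Prop :=
  σ τ.a1 = τ.o1 ∧ σ τ.a2 = τ.o2 ∧ M.G.Adj τ.a1 τ.a2 ∧
    M.Prefers τ.a1 τ.o2 τ.o1 ∧ M.Prefers τ.a2 τ.o1 τ.o2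

/-- The assignment obtained from `σ` by performing the swap `τ`. -/
def applySwap (σ : Fin N → Fin N) (τ : Swap N) : Fin N → Fin N :=
  σ ∘ Equiv.swap τ.a1 τ.a2

/-- The assignment obtained from `σ` by performing a sequence of swaps. -/
def applySeq (σ : Fin N → Fin N) : List (Swap N) → (Fin N → Fin N)
  | [] => σ
  | τ :: φ => applySeq (applySwap σ τ) φ

/-- `φ` is a valid swap sequence for the start assignment `σ`. -/
def ValidSeq (M : SwapModel N) (σ : Fin N → Fin N) : List (Swap N) → Prop
  | [] => True
  | τ :: φ => M.Admitted σ τ ∧ M.ValidSeq (applySwap σ τ) φ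

/-- Object `x` is reachable for agent `I` from the initial assignment `σ0`. -/
def Reachable (M : SwapModel N) (σ0 : Fin N → Fin N) (I x : Fin N) : Prop :=
  ∃ φ : List (Swap N), M.ValidSeq σ0 φ ∧ applySeq σ0 φ I = x

end SwapModel

/-- The agent that gives away object `q` in the swap `τ` (assuming `τ` involves `q`). -/
def giver {N : ℕ} (q : Fin N) (τ : Swap N) : Fin N :=
  if τ.o1 = q then τ.a1 else τ.a2

/-! Object `q` is handed on along the swaps that involve it: the receiver of `q` in one such
swap is the giver of `q` in the next, and the first giver is agent `q`. Along a valid swap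
sequence every agent's object only gets better. So an agent who receives `q` in exchange for
`y` and later gives `q` away for `w` ranks `w ≻ q ≻ y ⪰ (her initial object)`; a list of
length at most three leaves room for nothing else, hence `y` is her initial object and her
list is exactly `[w, q, y]`. -/

open Function Relation

def receiver {N : ℕ} (q : Fin N) (τ : Swap N) : Fin N :=
  if τ.o1 = q then τ.a2 else τ.a1

def swappedFor {N : ℕ} (q : Fin N) (τ : Swap N) : Fin N :=
  if τ.o1 = q then τ.o2 else τ.o1

lemma swappedFor_eq {N : ℕ} {τ : Swap N} {p q : Fin N}
    (h : (τ.o1 = p ∧ τ.o2 = q) ∨ (τ.o2 = p ∧ τ.o1 = q)) : swappedFor q τ = p := by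
  unfold swappedFor
  rcases h with ⟨h1, h2⟩ | ⟨h2, h1⟩ <;> split_ifs <;> simp_all

abbrev Swap.Involves {N : ℕ} (τ : Swap N) (q : Fin N) : Prop := τ.o1 = q ∨ τ.o2 = q

def swapsInvolving {N : ℕ} (q : Fin N) (φ : List (Swap N)) : List (Swap N) :=
  φ.filter fun τ => decide (τ.Involves q)

def IsRelay {N : ℕ} (q : Fin N) : Fin N → List (Swap N) → Prop
  | _, [] => True
  | h, τ :: φ => giver q τ = h ∧ IsRelay q (receiver q τ) φ

lemma IsRelay.giver_getElem_zero {N : ℕ} {q h : Fin N} :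
    ∀ {φ : List (Swap N)}, IsRelay q h φ → (hφ : 0 < φ.length) → giver q φ[0] = h
  | _ :: _, hφ, _ => hφ.1

lemma IsRelay.giver_getElem_succ {N : ℕ} {q : Fin N} :
    ∀ {h : Fin N} {φ : List (Swap N)} {z : ℕ}, IsRelay q h φ → (hz : z + 1 < φ.length) →
      giver q φ[z + 1] = receiver q φ[z]
  | _, _ :: _, 0, ⟨_, hφ⟩, hz => hφ.giver_getElem_zero _
  | _, _ :: _, _ + 1, ⟨_, hφ⟩, hz => hφ.giver_getElem_succ (by simpa using hz)

lemma List.filter_take_add_one_of_pos {α : Type*} {l : List α} {P : α → Bool} {r : ℕ}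
    (hr : r < l.length) (h : P l[r]) :
    (l.take (r + 1)).filter P = (l.take r).filter P ++ [l[r]] := by
  rw [List.take_add_one, List.getElem?_eq_getElem hr, List.filter_append]
  simp [h]

namespace SwapModel

variable {N : ℕ} {M : SwapModel N} {σ : Fin N → Fin N} {τ : Swap N} {ψ : List (Swap N)}
  {i q : Fin N}

lemma getElem?_pref_inj {u : Fin N} {k l : ℕ} (hk : (M.pref i)[k]? = some u)
    (hl : (M.pref i)[l]? = some u) : k = l :=
  (List.getElem?_inj (List.getElem?_eq_some_iff.mp hk).1 (M.nodup i)).mp (hk.trans hl.symm)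

lemma not_prefers_of_prefers_of_prefers {w y c : Fin N} (h3 : (M.pref i).length ≤ 3)
    (hwq : M.Prefers i w q) (hqy : M.Prefers i q y) : ¬ M.Prefers i y c := by
  rintro ⟨k5, k6, h56, hk5, hk6⟩
  obtain ⟨k1, k2, h12, -, hk2⟩ := hwq
  obtain ⟨k3, k4, h34, hk3, hk4⟩ := hqy
  have := getElem?_pref_inj hk2 hk3
  have := getElem?_pref_inj hk4 hk5
  have := (List.getElem?_eq_some_iff.mp hk6).1
  omega

lemma pref_eq_of_prefers_of_prefers {w y : Fin N} (h3 : (M.pref i).length ≤ 3)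
    (hwq : M.Prefers i w q) (hqy : M.Prefers i q y) : M.pref i = [w, q, y] := by
  obtain ⟨k1, k2, h12, hk1, hk2⟩ := hwq
  obtain ⟨k3, k4, h34, hk3, hk4⟩ := hqy
  have := getElem?_pref_inj hk2 hk3
  have := (List.getElem?_eq_some_iff.mp hk4).1
  obtain ⟨a, b, c, habc⟩ := List.length_eq_three.mp (show (M.pref i).length = 3 by omega)
  obtain rfl : k1 = 0 := by omega
  obtain rfl : k2 = 1 := by omega
  obtain rfl : k4 = 2 := by omega
  rw [habc] at hk1 hk2 hk4 ⊢
  simp only [List.getElem?_cons_zero, List.getElem?_cons_succ, Option.some.injEq] at hk1 hk2 hk4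
  rw [hk1, hk2, hk4]

lemma Admitted.oriented (h : M.Admitted σ τ) (hq : τ.Involves q) :
    M.Admitted σ ⟨giver q τ, q, receiver q τ, swappedFor q τ⟩ := by
  obtain ⟨h1, h2, hadj, hp1, hp2⟩ := h
  unfold giver receiver swappedFor
  split_ifs with ho
  · subst ho
    exact ⟨h1, h2, hadj, hp1, hp2⟩
  · obtain rfl := hq.resolve_left ho
    exact ⟨h2, h1, hadj.symm, hp2, hp1⟩

lemma Admitted.applySwap_receiver (h : M.Admitted σ τ) (hq : τ.Involves q) :
    applySwap σ τ (receiver q τ) = q := by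
  unfold applySwap receiver
  split_ifs with ho
  · simp [h.1, ho]
  · simp [h.2.1, hq.resolve_left ho]

lemma Admitted.applySwap_of_not_involves (h : M.Admitted σ τ) (hq : ¬ τ.Involves q)
    (hi : σ i = q) : applySwap σ τ i = q := by
  have h1 : i ≠ τ.a1 := by rintro rfl; exact hq (.inl (h.1 ▸ hi))
  have h2 : i ≠ τ.a2 := by rintro rfl; exact hq (.inr (h.2.1 ▸ hi))
  simpa [applySwap, Equiv.swap_apply_of_ne_of_ne h1 h2] using hi

lemma Admitted.reflGen_applySwap (h : M.Admitted σ τ) (i : Fin N) :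
    ReflGen (M.Prefers i) (applySwap σ τ i) (σ i) := by
  obtain ⟨h1, h2, -, hp1, hp2⟩ := h
  unfold applySwap
  rcases eq_or_ne i τ.a1 with rfl | h1'
  · simpa [h1, h2] using ReflGen.single hp1
  rcases eq_or_ne i τ.a2 with rfl | h2'
  · simpa [h1, h2] using ReflGen.single hp2
  · simpa [Equiv.swap_apply_of_ne_of_ne h1' h2'] using ReflGen.refl

lemma ValidSeq.take : ∀ {σ : Fin N → Fin N} {φ : List (Swap N)}, M.ValidSeq σ φ →
    ∀ n, M.ValidSeq σ (φ.take n)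
  | _, [], _, _ => by simp [ValidSeq]
  | _, _ :: _, _, 0 => trivial
  | _, _ :: _, ⟨h, hφ⟩, n + 1 => ⟨h, hφ.take n⟩

lemma ValidSeq.exists_admitted_of_mem : ∀ {σ : Fin N → Fin N} {ψ : List (Swap N)},
    M.ValidSeq σ ψ → τ ∈ ψ →
      ∃ σ', (∀ i, ReflTransGen (M.Prefers i) (σ' i) (σ i)) ∧ M.Admitted σ' τ
  | σ, _ :: _, ⟨hadm, hψ⟩, hτ => by
    rcases List.mem_cons.mp hτ with rfl | hτ
    · exact ⟨σ, fun _ => .refl, hadm⟩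
    · obtain ⟨σ', hσ', hτ'⟩ := hψ.exists_admitted_of_mem hτ
      exact ⟨σ', fun i => (hσ' i).trans (hadm.reflGen_applySwap i).to_reflTransGen, hτ'⟩

lemma ValidSeq.isRelay_swapsInvolving : ∀ {σ : Fin N → Fin N} {ψ : List (Swap N)} {h : Fin N},
    M.ValidSeq σ ψ → Injective σ → σ h = q → IsRelay q h (swapsInvolving q ψ)
  | _, [], _, _, _, _ => trivial
  | σ, τ :: ψ, h, ⟨hadm, hψ⟩, hσ, hh => by
    have hσ' : Injective (applySwap σ τ) := hσ.comp (Equiv.swap _ _).injective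
    by_cases hq : τ.Involves q
    · rw [swapsInvolving, List.filter_cons_of_pos (by simpa using hq)]
      exact ⟨hσ ((hadm.oriented hq).1.trans hh.symm),
        hψ.isRelay_swapsInvolving hσ' (hadm.applySwap_receiver hq)⟩
    · rw [swapsInvolving, List.filter_cons_of_neg (by simpa using hq)]
      exact hψ.isRelay_swapsInvolving hσ' (hadm.applySwap_of_not_involves hq hh)

section swapsInvolving

variable (hψ : M.ValidSeq σ ψ)
include hψ

lemma ValidSeq.exists_admitted_of_mem_swapsInvolving (hτ : τ ∈ swapsInvolving q ψ) :
    ∃ σ', (∀ i, ReflTransGen (M.Prefers i) (σ' i) (σ i)) ∧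
      M.Admitted σ' ⟨giver q τ, q, receiver q τ, swappedFor q τ⟩ := by
  obtain ⟨hτ, hq⟩ := List.mem_filter.mp hτ
  obtain ⟨σ', hσ', hadm⟩ := hψ.exists_admitted_of_mem hτ
  exact ⟨σ', hσ', hadm.oriented (by simpa using hq)⟩

lemma ValidSeq.prefers_giver (hτ : τ ∈ swapsInvolving q ψ) :
    M.Prefers (giver q τ) (swappedFor q τ) q := by
  obtain ⟨_, -, hadm⟩ := hψ.exists_admitted_of_mem_swapsInvolving hτ
  exact hadm.2.2.2.1

lemma ValidSeq.prefers_receiver (hτ : τ ∈ swapsInvolving q ψ) :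
    M.Prefers (receiver q τ) q (swappedFor q τ) := by
  obtain ⟨_, -, hadm⟩ := hψ.exists_admitted_of_mem_swapsInvolving hτ
  exact hadm.2.2.2.2

lemma ValidSeq.reflTransGen_swappedFor (hτ : τ ∈ swapsInvolving q ψ) :
    ReflTransGen (M.Prefers (receiver q τ)) (swappedFor q τ) (σ (receiver q τ)) := by
  obtain ⟨σ', hσ', hadm⟩ := hψ.exists_admitted_of_mem_swapsInvolving hτ
  simpa only [hadm.2.1] using hσ' (receiver q τ)

variable {h : Fin N} (hrel : IsRelay q h (swapsInvolving q ψ))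
  (h3 : ∀ i, (M.pref i).length ≤ 3) {z : ℕ} (hz : z + 1 < (swapsInvolving q ψ).length)
include hrel h3 hz

lemma ValidSeq.swappedFor_getElem :
    swappedFor q (swapsInvolving q ψ)[z] = σ (giver q (swapsInvolving q ψ)[z + 1]) := by
  have hw := hψ.prefers_giver (List.getElem_mem hz)
  rw [hrel.giver_getElem_succ hz] at hw ⊢
  refine (hψ.reflTransGen_swappedFor (List.getElem_mem _)).cases_head.resolve_right ?_
  rintro ⟨_, hc, -⟩
  exact not_prefers_of_prefers_of_prefers (h3 _) hw (hψ.prefers_receiver (List.getElem_mem _)) hc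

lemma ValidSeq.pref_giver_getElem_succ :
    M.pref (giver q (swapsInvolving q ψ)[z + 1]) =
      [swappedFor q (swapsInvolving q ψ)[z + 1], q, σ (giver q (swapsInvolving q ψ)[z + 1])] := by
  have hw := hψ.prefers_giver (List.getElem_mem hz)
  rw [← hψ.swappedFor_getElem hrel h3 hz]
  rw [hrel.giver_getElem_succ hz] at hw ⊢
  exact pref_eq_of_prefers_of_prefers (h3 _) hw (hψ.prefers_receiver (List.getElem_mem _))

end swapsInvolving

end SwapModel

-- Agent `0` is the paper's agent 1.
/-- Lemma 1 (i)-(iv).  Agents are `0, …, N` (agent `0` playing the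
role of "agent 1" and agent `Fin.last N` the role of "agent n"), every preference list
has length at most three, and the initial assignment is `σ0 = id` (agent `i` initially
holds object `i`).  Let `φ` be a valid swap sequence for `σ0` in which agent `0`
obtains object `Fin.last N` in the last swap, let `τr = φ[r]` be a swap
`{{0, p}, {k, q}}` of `φ`, let `φ'` be the subsequence of the prefix `φ[0..r]`
consisting of exactly those swaps involving object `q`, let `a z` (for `1 ≤ z ≤ s`,
where `s` is the length of `φ'`) be the agent giving away `q` in the `z`-th swap of
`φ'`, and let `a (s+1) = p`.  Then:
(i) the last swap of `φ'` is `τr`; (ii) `a 1 = q`; (iii) for `1 ≤ z ≤ s`, agent `a z`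
prefers object `a (z+1)` to object `q`; (iv) for `2 ≤ z ≤ s`, the preference list of
agent `a z` is exactly `a (z+1) ≻ q ≻ a z` (her initial object last). -/
theorem statement2 (N : ℕ) (M : SwapModel (N + 1))
    (hpref3 : ∀ i, (M.pref i).length ≤ 3)
    (φ : List (Swap (N + 1))) (hvalid : M.ValidSeq id φ)
    (p q : Fin (N + 1)) (r : ℕ) (hr : r < φ.length)
    (hτr : ((φ[r]'hr).a1 = 0 ∧ (φ[r]'hr).o1 = p ∧ (φ[r]'hr).o2 = q) ∨
           ((φ[r]'hr).a2 = 0 ∧ (φ[r]'hr).o2 = p ∧ (φ[r]'hr).o1 = q))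
    (φ' : List (Swap (N + 1)))
    (hφ' : φ' = (φ.take (r + 1)).filter (fun τ => decide (τ.o1 = q ∨ τ.o2 = q)))
    (a : ℕ → Fin (N + 1))
    (ha : ∀ (z : ℕ) (h1 : 1 ≤ z) (hz : z ≤ φ'.length),
      a z = giver q (φ'[z - 1]'(by omega)))
    (hap : a (φ'.length + 1) = p) :
    (φ'.getLast? = some (φ[r]'hr)) ∧
    (a 1 = q) ∧
    (∀ z, 1 ≤ z → z ≤ φ'.length → M.Prefers (a z) (a (z + 1)) q) ∧
    (∀ z, 2 ≤ z → z ≤ φ'.length → M.pref (a z) = [a (z + 1), q, a z]) := by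
  have hψ := hvalid.take (r + 1)
  have hrel : IsRelay q q _ := hψ.isRelay_swapsInvolving injective_id rfl
  change φ' = swapsInvolving q (φ.take (r + 1)) at hφ'
  subst hφ'
  set L := swapsInvolving q (φ.take (r + 1))
  have hL : L = swapsInvolving q (φ.take r) ++ [φ[r]] :=
    List.filter_take_add_one_of_pos hr (by rcases hτr with ⟨-, -, h⟩ | ⟨-, -, h⟩ <;> simp [h])
  have hs : 0 < L.length := by simp [hL]
  have hgiver : ∀ z (hz : z < L.length), a (z + 1) = giver q L[z] := fun z hz => by
    simpa using ha (z + 1) (by omega) hz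
  have hswapped : ∀ z (hz : z < L.length), swappedFor q L[z] = a (z + 1 + 1) := by
    intro z hz
    by_cases hz' : z + 1 < L.length
    · rw [hψ.swappedFor_getElem hrel hpref3 hz', hgiver (z + 1) hz']
      rfl
    · obtain rfl : z = L.length - 1 := by omega
      rw [show L.length - 1 + 1 + 1 = L.length + 1 by omega, hap]
      simpa [hL] using swappedFor_eq (hτr.imp And.right And.right)
  refine ⟨by simp [hL], (hgiver 0 hs).trans (hrel.giver_getElem_zero hs), ?_, ?_⟩
  · intro z h1 hz
    obtain ⟨z, rfl⟩ := Nat.exists_eq_add_of_le' h1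
    rw [hgiver z hz, ← hswapped z hz]
    exact hψ.prefers_giver (List.getElem_mem _)
  · intro z h2 hz
    obtain ⟨z, rfl⟩ : ∃ k, z = k + 1 + 1 := ⟨z - 2, by omega⟩
    rw [hgiver (z + 1) hz, ← hswapped (z + 1) hz]
    exact hψ.pref_giver_getElem_succ hrel hpref3 hz
end

section
/- If the directed graph D contains a directed path from vertex n to vertex 1, then object x_n is reachable for agent 1 from the initial assignment σ_0. -/
/-- The arc relation of the directed graph `D = (V, F)` with
`F = {(i,j) : {i,j} ∈ E, x_j ≻_i x_n, x_n ≻_j x_j}` (objects being identified with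
the index of the agent initially holding them, and `x_n` being object `Fin.last N`). -/
def ArcD {N : ℕ} (M : SwapModel (N + 1)) (i j : Fin (N + 1)) : Prop :=
  M.G.Adj i j ∧ M.Prefers i j (Fin.last N) ∧ M.Prefers j (Fin.last N) j

/-- `D` contains a directed path from vertex `u` to vertex `v`. -/
def HasDirPathD {N : ℕ} (M : SwapModel (N + 1)) (u v : Fin (N + 1)) : Prop :=
  ∃ (k : ℕ) (c : ℕ → Fin (N + 1)), c 0 = u ∧ c k = v ∧
    (∀ m, m < k → ArcD M (c m) (c (m + 1))) ∧
    (∀ m m', m ≤ k → m' ≤ k → c m = c m' → m = m')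

namespace SwapModel

variable {N : ℕ} (M : SwapModel N)

theorem reachable_of_admitted {σ : Fin N → Fin N} {τ : Swap N} {I x : Fin N}
    (hτ : M.Admitted σ τ) (h : M.Reachable (applySwap σ τ) I x) : M.Reachable σ I x :=
  let ⟨φ, hφ, hend⟩ := h
  ⟨τ :: φ, ⟨hτ, hφ⟩, hend⟩

/-- Since the agents `c 0, …, c k` are distinct, agent `c (m + 1)` still holds `σ (c (m + 1))`
when `x` reaches `c m`, so the swaps passing `x` along the path are admitted one after another. -/
theorem reachable_along_path {σ : Fin N → Fin N} {x : Fin N} (k : ℕ) (c : ℕ → Fin N)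
    (hinj : Set.InjOn c (Set.Iic k)) (hstart : σ (c 0) = x)
    (hstep : ∀ m < k, M.G.Adj (c m) (c (m + 1)) ∧
      M.Prefers (c m) (σ (c (m + 1))) x ∧ M.Prefers (c (m + 1)) x (σ (c (m + 1)))) :
    M.Reachable σ (c k) x := by
  induction k generalizing σ c with
  | zero => exact ⟨[], trivial, hstart⟩
  | succ k ih =>
    obtain ⟨hadj, hpref₀, hpref₁⟩ := hstep 0 (Nat.succ_pos k)
    let τ : Swap N := ⟨c 0, x, c 1, σ (c 1)⟩
    have hτ : M.Admitted σ τ := ⟨hstart, rfl, hadj, hpref₀, hpref₁⟩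
    have hfixed : ∀ m ≤ k, 1 ≤ m → applySwap σ τ (c (m + 1)) = σ (c (m + 1)) := by
      intro m hm h1
      have hne : ∀ j ≤ 1, c (m + 1) ≠ c j := fun j hj h ↦ by
        have := hinj (Set.mem_Iic.2 (by omega)) (Set.mem_Iic.2 (by omega)) h
        omega
      exact congrArg σ (Equiv.swap_apply_of_ne_of_ne (hne 0 (by omega)) (hne 1 le_rfl))
    refine M.reachable_of_admitted hτ (ih (fun m ↦ c (m + 1)) ?_ ?_ ?_)
    · exact fun a ha b hb h ↦ Nat.succ_injective
        (hinj (Set.mem_Iic.2 (Nat.succ_le_succ ha)) (Set.mem_Iic.2 (Nat.succ_le_succ hb)) h)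
    · simp only [applySwap, τ, Function.comp_apply, Equiv.swap_apply_right]
      exact hstart
    · intro m hm
      rw [hfixed (m + 1) hm (Nat.le_add_left 1 m)]
      exact hstep (m + 1) (Nat.succ_lt_succ hm)

end SwapModel

/-- Agent `0` plays the role of agent 1 of the paper and `Fin.last N` that of agent `n`. -/
theorem statement5_general (N : ℕ) (M : SwapModel (N + 1))
    (hpath : HasDirPathD M (Fin.last N) 0) :
    M.Reachable id 0 (Fin.last N) := by
  obtain ⟨k, c, hc0, hck, harc, hinj⟩ := hpath
  rw [← hck]
  exact M.reachable_along_path k c (fun a ha b hb ↦ hinj a b ha hb) hc0 harc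

/-- Agents are `0, …, N` (agent `0` playing the role of "agent 1"
and `Fin.last N` the role of "agent n"), every preference list has length at most
three, and the initial assignment is `σ0 = id`.  If the directed graph `D` contains
a directed path from vertex `Fin.last N` to vertex `0`, then object `Fin.last N`
(i.e. `x_n`) is reachable for agent `0` from `σ0`. -/
theorem statement5 (N : ℕ) (M : SwapModel (N + 1))
    (hpref3 : ∀ i, (M.pref i).length ≤ 3)
    (hpath : HasDirPathD M (Fin.last N) 0) :
    M.Reachable id 0 (Fin.last N) :=
  statement5_general N M hpath
end

section
/- Let the underlying graph be a path on agents 1,…,n, with σ_0(n) = x and target agent I < n. In every sequence of swaps after which agent I holds x, object x passes through each of the edges {I+t−1, I+t} for t = 1,…,n−I exactly once; equivalently, x is swapped exactly once over each edge lying between agent I and agent n. -/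
/-- The path graph on `N` agents: agents `i` and `i+1` are adjacent. -/
def pathGraph' (N : ℕ) : SimpleGraph (Fin N) where
  Adj i j := i.val + 1 = j.val ∨ j.val + 1 = i.val
  symm := by constructor; intro i j h; exact h.symm
  loopless := by constructor; intro i h; rcases h with h | h <;> omega

/-- Swap `τ` exchanges the objects `u` and `v`. -/
def Swap.exchanges {N : ℕ} (τ : Swap N) (u v : Fin N) : Prop :=
  (τ.o1 = u ∧ τ.o2 = v) ∨ (τ.o1 = v ∧ τ.o2 = u)

/-- Swap `τ` takes place over the edge `{j, j+1}` of the path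
(agents here being indexed by their `Fin` value). -/
def Swap.onEdge {N : ℕ} (τ : Swap N) (j : ℕ) : Prop :=
  (τ.a1.val = j ∧ τ.a2.val = j + 1) ∨ (τ.a2.val = j ∧ τ.a1.val = j + 1)

/-!
Every swap moves both agents involved strictly up their preference lists, so an agent who gives
an object away never gets it back. Hence the agent holding `x` never returns to an agent it has
left, and `x` crosses each edge of the path at most once. On the other hand `x` moves by at most
one agent per swap and travels from the last agent down to agent `I`, so it crosses every edge
in between.
-/

def CrossesAt (p : ℕ → ℕ) (j k : ℕ) : Prop :=
  p k = j ∧ p (k + 1) = j + 1 ∨ p k = j + 1 ∧ p (k + 1) = j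

theorem exists_crossesAt {p : ℕ → ℕ} {j L : ℕ} (h0 : j < p 0) (hL : p L ≤ j)
    (hstep : ∀ k < L, p k ≤ p (k + 1) + 1) : ∃ k < L, CrossesAt p j k := by
  classical
  have hk : j < p (Nat.findGreatest (fun k => j < p k) L) :=
    Nat.findGreatest_spec (P := fun k => j < p k) (Nat.zero_le L) h0
  have hkL : Nat.findGreatest (fun k => j < p k) L < L :=
    (Nat.findGreatest_le L).lt_of_ne fun h => by rw [h] at hk; omega
  have hk1 : ¬j < p (Nat.findGreatest (fun k => j < p k) L + 1) :=
    Nat.findGreatest_is_greatest (P := fun k => j < p k) (Nat.lt_succ_self _) hkL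
  generalize Nat.findGreatest (fun k => j < p k) L = k at hk hkL hk1
  have := hstep k hkL
  exact ⟨k, hkL, Or.inr ⟨by omega, by omega⟩⟩

theorem crossesAt_unique {p : ℕ → ℕ} {j L : ℕ}
    (hret : ∀ s k s', s ≤ k → k ≤ s' → s' ≤ L → p s' = p s → p k = p s)
    {k₁ k₂ : ℕ} (hk₁ : k₁ < L) (hk₂ : k₂ < L) (h₁ : CrossesAt p j k₁) (h₂ : CrossesAt p j k₂) :
    k₁ = k₂ := by
  wlog hlt : k₁ < k₂ generalizing k₁ k₂
  · rcases Nat.lt_or_ge k₂ k₁ with h | h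
    · exact (this hk₂ hk₁ h₂ h₁ h).symm
    · omega
  -- In each case `p` leaves the value `p k₁` or `p (k₁ + 1)` and is back at it at step `k₂ + 1`.
  rcases h₁ with ⟨a₁, b₁⟩ | ⟨a₁, b₁⟩ <;> rcases h₂ with ⟨a₂, b₂⟩ | ⟨a₂, b₂⟩
  · have := hret (k₁ + 1) k₂ (k₂ + 1) hlt (by omega) hk₂ (by omega); omega
  · have := hret k₁ (k₁ + 1) (k₂ + 1) (by omega) (by omega) hk₂ (by omega); omega
  · have := hret k₁ (k₁ + 1) (k₂ + 1) (by omega) (by omega) hk₂ (by omega); omega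
  · have := hret (k₁ + 1) k₂ (k₂ + 1) hlt (by omega) hk₂ (by omega); omega

theorem existsUnique_crossesAt {p : ℕ → ℕ} {j L : ℕ} (h0 : j < p 0) (hL : p L ≤ j)
    (hstep : ∀ k < L, p k ≤ p (k + 1) + 1)
    (hret : ∀ s k s', s ≤ k → k ≤ s' → s' ≤ L → p s' = p s → p k = p s) :
    ∃! k, k < L ∧ CrossesAt p j k := by
  obtain ⟨k, hkL, hk⟩ := exists_crossesAt h0 hL hstep
  exact ⟨k, ⟨hkL, hk⟩, fun k' ⟨hk'L, hk'⟩ => crossesAt_unique hret hk'L hkL hk' hk⟩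

theorem eq_or_lt_of_forall_eq_or_lt {α : Type*} {f : ℕ → α} (r : α → ℕ) {L : ℕ}
    (hf : ∀ k < L, f (k + 1) = f k ∨ r (f (k + 1)) < r (f k)) {s k : ℕ} (hsk : s ≤ k)
    (hkL : k ≤ L) : f k = f s ∨ r (f k) < r (f s) := by
  induction k, hsk using Nat.le_induction with
  | base => exact Or.inl rfl
  | succ k hsk ih =>
    rcases hf k (by omega) with h | h <;> rcases ih (by omega) with h' | h'
    · exact Or.inl (h.trans h')
    · rw [h]; exact Or.inr h'
    · rw [← h']; exact Or.inr h
    · exact Or.inr (h.trans h')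

theorem eq_of_forall_eq_or_lt {α : Type*} {f : ℕ → α} (r : α → ℕ) {L : ℕ}
    (hf : ∀ k < L, f (k + 1) = f k ∨ r (f (k + 1)) < r (f k)) {s k s' : ℕ} (hsk : s ≤ k)
    (hks' : k ≤ s') (hs'L : s' ≤ L) (h : f s' = f s) : f k = f s := by
  rcases eq_or_lt_of_forall_eq_or_lt r hf hsk (hks'.trans hs'L) with hk | hk
  · exact hk
  rcases eq_or_lt_of_forall_eq_or_lt r hf hks' hs'L with hk' | hk'
  · rw [← hk', h]
  · rw [h] at hk'; omega

theorem Swap.crossesAt_iff {N : ℕ} (τ : Swap N) (b : Fin N) (j : ℕ) :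
    ((b : ℕ) = j ∧ (Equiv.swap τ.a1 τ.a2 b : ℕ) = j + 1 ∨
      (b : ℕ) = j + 1 ∧ (Equiv.swap τ.a1 τ.a2 b : ℕ) = j) ↔
      (b = τ.a1 ∨ b = τ.a2) ∧ τ.onEdge j := by
  unfold Swap.onEdge
  by_cases h1 : b = τ.a1
  · subst h1; rw [Equiv.swap_apply_left]; omega
  by_cases h2 : b = τ.a2
  · subst h2; rw [Equiv.swap_apply_right]; omega
  · rw [Equiv.swap_apply_of_ne_of_ne h1 h2]; simp only [h1, h2, false_or, false_and, iff_false]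
    omega

namespace SwapModel

variable {N : ℕ}

theorem Prefers.idxOf_lt {M : SwapModel N} {i u v : Fin N} (h : M.Prefers i u v) :
    (M.pref i).idxOf u < (M.pref i).idxOf v := by
  obtain ⟨k, l, hkl, hu, hv⟩ := h
  rw [List.getElem?_eq_some_iff] at hu hv
  obtain ⟨hk, rfl⟩ := hu
  obtain ⟨hl, rfl⟩ := hv
  rwa [(M.nodup i).idxOf_getElem k hk, (M.nodup i).idxOf_getElem l hl]

theorem Admitted.applySwap_eq_or_prefers {M : SwapModel N} {σ : Fin N → Fin N} {τ : Swap N}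
    (h : M.Admitted σ τ) (a : Fin N) :
    applySwap σ τ a = σ a ∨ M.Prefers a (applySwap σ τ a) (σ a) := by
  obtain ⟨h1, h2, -, hp1, hp2⟩ := h
  simp only [applySwap, Function.comp_apply]
  by_cases ha1 : a = τ.a1
  · subst ha1; rw [Equiv.swap_apply_left, h1, h2]; exact Or.inr hp1
  by_cases ha2 : a = τ.a2
  · subst ha2; rw [Equiv.swap_apply_right, h1, h2]; exact Or.inr hp2
  · exact Or.inl (by rw [Equiv.swap_apply_of_ne_of_ne ha1 ha2])

theorem applySeq_append (σ : Fin N → Fin N) (φ ψ : List (Swap N)) :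
    applySeq σ (φ ++ ψ) = applySeq (applySeq σ φ) ψ := by
  induction φ generalizing σ with
  | nil => rfl
  | cons τ φ ih => exact ih _

theorem applySeq_take_succ (σ : Fin N → Fin N) {φ : List (Swap N)} {k : ℕ}
    (hk : k < φ.length) :
    applySeq σ (φ.take (k + 1)) = applySwap (applySeq σ (φ.take k)) φ[k] := by
  rw [← List.take_append_getElem hk, applySeq_append]; rfl

theorem applySeq_injective {σ : Fin N → Fin N} (hσ : σ.Injective) (φ : List (Swap N)) :
    (applySeq σ φ).Injective := by
  induction φ generalizing σ with
  | nil => exact hσ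
  | cons τ φ ih => exact ih (hσ.comp (Equiv.swap τ.a1 τ.a2).injective)

theorem validSeq_append {M : SwapModel N} {σ : Fin N → Fin N} {φ ψ : List (Swap N)} :
    M.ValidSeq σ (φ ++ ψ) ↔ M.ValidSeq σ φ ∧ M.ValidSeq (applySeq σ φ) ψ := by
  induction φ generalizing σ with
  | nil => simp [ValidSeq, applySeq]
  | cons τ φ ih => simp [ValidSeq, applySeq, ih, and_assoc]

theorem ValidSeq.admitted_getElem {M : SwapModel N} {σ : Fin N → Fin N} {φ : List (Swap N)}
    (hφ : M.ValidSeq σ φ) {k : ℕ} (hk : k < φ.length) :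
    M.Admitted (applySeq σ (φ.take k)) φ[k] := by
  rw [← List.take_append_drop k φ, validSeq_append, List.drop_eq_getElem_cons hk] at hφ
  exact hφ.2.1

theorem ValidSeq.applySeq_take_eq_of_eq {M : SwapModel N} {σ : Fin N → Fin N}
    {φ : List (Swap N)} (hφ : M.ValidSeq σ φ) (a : Fin N) {s k s' : ℕ} (hsk : s ≤ k)
    (hks' : k ≤ s') (hs'L : s' ≤ φ.length)
    (h : applySeq σ (φ.take s') a = applySeq σ (φ.take s) a) :
    applySeq σ (φ.take k) a = applySeq σ (φ.take s) a := by
  -- Every swap moves both agents involved strictly up their preference lists.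
  refine eq_of_forall_eq_or_lt (f := fun k => applySeq σ (φ.take k) a) (M.pref a).idxOf
    (fun k hk => ?_) hsk hks' hs'L h
  simp only [applySeq_take_succ σ hk]
  exact ((hφ.admitted_getElem hk).applySwap_eq_or_prefers a).imp_right Prefers.idxOf_lt

def track (a : Fin N) : List (Swap N) → Fin N
  | [] => a
  | τ :: φ => track (Equiv.swap τ.a1 τ.a2 a) φ

theorem applySeq_track (σ : Fin N → Fin N) (a : Fin N) (φ : List (Swap N)) :
    applySeq σ φ (track a φ) = σ a := by
  induction φ generalizing σ a with
  | nil => rfl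
  | cons τ φ ih => simp [applySeq, track, ih, applySwap]

theorem eq_track_of_applySeq_eq {σ : Fin N → Fin N} (hσ : σ.Injective) {φ : List (Swap N)}
    {a b : Fin N} (h : applySeq σ φ b = σ a) : b = track a φ :=
  applySeq_injective hσ φ (h.trans (applySeq_track σ a φ).symm)

theorem track_append (a : Fin N) (φ ψ : List (Swap N)) :
    track a (φ ++ ψ) = track (track a φ) ψ := by
  induction φ generalizing a with
  | nil => rfl
  | cons τ φ ih => exact ih _

theorem track_take_succ (a : Fin N) {φ : List (Swap N)} {k : ℕ} (hk : k < φ.length) :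
    track a (φ.take (k + 1)) = Equiv.swap φ[k].a1 φ[k].a2 (track a (φ.take k)) := by
  rw [← List.take_append_getElem hk, track_append]; rfl

theorem ValidSeq.track_take_eq_of_eq {M : SwapModel N} {σ : Fin N → Fin N}
    {φ : List (Swap N)} (hφ : M.ValidSeq σ φ) (hσ : σ.Injective) (a : Fin N) {s k s' : ℕ}
    (hsk : s ≤ k) (hks' : k ≤ s') (hs'L : s' ≤ φ.length)
    (h : track a (φ.take s') = track a (φ.take s)) :
    track a (φ.take k) = track a (φ.take s) := by
  refine (eq_track_of_applySeq_eq hσ ?_).symm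
  rw [hφ.applySeq_take_eq_of_eq _ hsk hks' hs'L
    (by rw [applySeq_track σ a (φ.take s), ← h, applySeq_track]),
    applySeq_track]

theorem ValidSeq.exists_swap_onEdge_iff {M : SwapModel N} {σ : Fin N → Fin N}
    {φ : List (Swap N)} (hφ : M.ValidSeq σ φ) (hσ : σ.Injective) (a : Fin N) (j k : ℕ) :
    (∃ τ : Swap N, φ[k]? = some τ ∧ (τ.o1 = σ a ∨ τ.o2 = σ a) ∧ τ.onEdge j) ↔
      k < φ.length ∧ CrossesAt (fun k => (track a (φ.take k) : ℕ)) j k := by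
  constructor
  · rintro ⟨τ, hτ, hx, hedge⟩
    obtain ⟨hk, rfl⟩ := List.getElem?_eq_some_iff.1 hτ
    obtain ⟨h1, h2, -⟩ := hφ.admitted_getElem hk
    refine ⟨hk, ?_⟩
    simp only [CrossesAt, track_take_succ a hk]
    refine (Swap.crossesAt_iff _ _ _).2 ⟨?_, hedge⟩
    rcases hx with hx | hx
    · exact Or.inl (eq_track_of_applySeq_eq hσ (h1.trans hx)).symm
    · exact Or.inr (eq_track_of_applySeq_eq hσ (h2.trans hx)).symm
  · rintro ⟨hk, hc⟩
    simp only [CrossesAt, track_take_succ a hk] at hc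
    obtain ⟨hb, hedge⟩ := (Swap.crossesAt_iff _ _ _).1 hc
    obtain ⟨h1, h2, -⟩ := hφ.admitted_getElem hk
    refine ⟨φ[k], List.getElem?_eq_getElem hk, ?_, hedge⟩
    rcases hb with hb | hb
    · exact Or.inl (by rw [← h1, ← hb, applySeq_track])
    · exact Or.inr (by rw [← h2, ← hb, applySeq_track])

end SwapModel

theorem pathGraph'_le_swap_apply_add_one {n : ℕ} {a b : Fin n} (h : (pathGraph' n).Adj a b)
    (c : Fin n) : (c : ℕ) ≤ Equiv.swap a b c + 1 := by
  rcases h with h | h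
  all_goals
    by_cases h1 : c = a
    · subst h1; rw [Equiv.swap_apply_left]; omega
    by_cases h2 : c = b
    · subst h2; rw [Equiv.swap_apply_right]; omega
    · rw [Equiv.swap_apply_of_ne_of_ne h1 h2]; omega

theorem statement10_general (N : ℕ) (M : SwapModel (N + 1)) (hG : M.G = pathGraph' (N + 1))
    (σ0 : Fin (N + 1) → Fin (N + 1)) (hσ0 : M.IsAssignment σ0)
    (x : Fin (N + 1)) (hx : σ0 (Fin.last N) = x)
    (I : Fin (N + 1))
    (φ : List (Swap (N + 1))) (hvalid : M.ValidSeq σ0 φ)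
    (hend : SwapModel.applySeq σ0 φ I = x) :
    ∀ t : ℕ, 1 ≤ t → t ≤ N - I.val →
      ∃! k : ℕ, ∃ τ : Swap (N + 1), φ[k]? = some τ ∧ (τ.o1 = x ∨ τ.o2 = x) ∧
        τ.onEdge (I.val + t - 1) := by
  intro t ht1 ht2
  subst hx
  have hinj := hσ0.1.injective
  have hI : I = SwapModel.track (Fin.last N) φ := SwapModel.eq_track_of_applySeq_eq hinj hend
  simp only [hvalid.exists_swap_onEdge_iff hinj]
  apply existsUnique_crossesAt
  · simp only [List.take_zero, SwapModel.track, Fin.val_last]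
    omega
  · rw [List.take_length, ← hI]
    omega
  · intro k hk
    rw [SwapModel.track_take_succ _ hk]
    exact pathGraph'_le_swap_apply_add_one (hG ▸ (hvalid.admitted_getElem hk).2.2.1) _
  · intro s k s' hsk hks' hs' h
    exact congrArg Fin.val (hvalid.track_take_eq_of_eq hinj _ hsk hks' hs' (Fin.val_injective h))

/-- The underlying graph is the path on agents `0, 1, …, N`
(these play the roles of the paper's agents `1, …, n` with `n = N + 1`), the target
object `x` is initially held by the last agent, and the target agent `I` is not the
last agent.  In every sequence of swaps after which agent `I` holds `x`, object `x`
passes through each of the edges `{I + t - 1, I + t}` for `t = 1, …, N - I` exactly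
once; i.e. `x` is swapped exactly once over each edge lying between agent `I` and
the last agent. -/
theorem statement10 (N : ℕ) (M : SwapModel (N + 1)) (hG : M.G = pathGraph' (N + 1))
    (σ0 : Fin (N + 1) → Fin (N + 1)) (hσ0 : M.IsAssignment σ0)
    (x : Fin (N + 1)) (hx : σ0 (Fin.last N) = x)
    (I : Fin (N + 1)) (hI : I < Fin.last N)
    (φ : List (Swap (N + 1))) (hvalid : M.ValidSeq σ0 φ)
    (hend : SwapModel.applySeq σ0 φ I = x) :
    ∀ t : ℕ, 1 ≤ t → t ≤ N - I.val →
      ∃! k : ℕ, ∃ τ : Swap (N + 1), φ[k]? = some τ ∧ (τ.o1 = x ∨ τ.o2 = x) ∧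
        τ.onEdge (I.val + t - 1) :=
  statement10_general N M hG σ0 hσ0 x hx I φ hvalid hend
end
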